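/- For every n ≥ 1, the largest cardinality of an equilateral set in ℓ_4^n is exactly n+1. -/
import Mathlib

open Finset

/-- The 4-norm on `ℝ^n`. -/
noncomputable def norm4 {n : ℕ} (x : Fin n → ℝ) : ℝ :=
  (∑ m, (x m) ^ 4) ^ ((1 : ℝ) / 4)

/-- A set `S ⊆ ℝ^n` is equilateral with respect to the 4-norm if there is `λ > 0`
with `‖x - y‖₄ = λ` for all distinct `x, y ∈ S`. -/
def IsEquilateral4 {n : ℕ} (S : Set (Fin n → ℝ)) : Prop :=
  ∃ lam > 0, ∀ x ∈ S, ∀ y ∈ S, x ≠ y → norm4 (x - y) = lam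

lemma sum_pow_four_nonneg {n : ℕ} (v : Fin n → ℝ) : 0 ≤ ∑ m, v m ^ 4 :=
  Finset.sum_nonneg fun m _ => by positivity

lemma sum_eq_of_norm4 {n : ℕ} (v : Fin n → ℝ) (lam : ℝ) (h : norm4 v = lam) :
    ∑ m, v m ^ 4 = lam ^ 4 := by
  have hA := sum_pow_four_nonneg v
  rw [← h, norm4, ← Real.rpow_natCast _ 4, ← Real.rpow_mul hA]
  norm_num

/-- The key double-sum expansion (Swanepoel's trick for `p = 4`). -/
lemma double_sum_expand {m : ℕ} (g a : Fin m → ℝ) (h1 : ∑ j, g j = 0)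
    (h2 : ∑ j, g j * a j = 0) :
    ∑ j, ∑ k, g j * g k * (a j - a k) ^ 4 = 6 * (∑ j, g j * a j ^ 2) ^ 2 := by
  have hY : ∑ j, 4 * (g j * a j) = 0 := by rw [← Finset.mul_sum, h2, mul_zero]
  have hZ : ∑ j : Fin m, 6 * (g j * a j ^ 2) = 6 * ∑ j, g j * a j ^ 2 :=
    (Finset.mul_sum _ _ _).symm
  have hW : ∑ j : Fin m, 4 * (g j * a j ^ 3) = 4 * ∑ j, g j * a j ^ 3 :=
    (Finset.mul_sum _ _ _).symm
  calc ∑ j, ∑ k, g j * g k * (a j - a k) ^ 4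
      = ∑ j, ∑ k, ((g j * a j ^ 4) * g k - (4 * (g j * a j ^ 3)) * (g k * a k)
          + (6 * (g j * a j ^ 2)) * (g k * a k ^ 2)
          - (4 * (g j * a j)) * (g k * a k ^ 3) + g j * (g k * a k ^ 4)) :=
        Finset.sum_congr rfl fun j _ => Finset.sum_congr rfl fun k _ => by ring
    _ = (∑ j, g j * a j ^ 4) * (∑ k, g k)
          - (∑ j, 4 * (g j * a j ^ 3)) * (∑ k, g k * a k)
          + (∑ j, 6 * (g j * a j ^ 2)) * (∑ k, g k * a k ^ 2)
          - (∑ j, 4 * (g j * a j)) * (∑ k, g k * a k ^ 3)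
          + (∑ j, g j) * (∑ k, g k * a k ^ 4) := by
        simp only [Finset.sum_add_distrib, Finset.sum_sub_distrib, ← Finset.sum_mul_sum]
    _ = 6 * (∑ j, g j * a j ^ 2) ^ 2 := by
        rw [h1, h2, hY, hZ]
        ring

/-- No `n+2` points in `ℝ^n` with all pairwise 4-distances equal. -/
lemma key {n : ℕ} (lam : ℝ) (hlam : 0 < lam) (f : Fin (n + 2) → (Fin n → ℝ))
    (hf : ∀ j k, j ≠ k → ∑ i, (f j i - f k i) ^ 4 = lam ^ 4) : False := by
  have hnli : ¬ LinearIndependent ℝ (fun j : Fin (n + 2) => ((1 : ℝ), f j)) := by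
    intro h
    have hc := h.fintype_card_le_finrank
    rw [Fintype.card_fin, Module.finrank_prod, Module.finrank_self, Module.finrank_pi,
      Fintype.card_fin] at hc
    omega
  obtain ⟨g, hg0, j₀, hj₀⟩ := Fintype.not_linearIndependent_iff.mp hnli
  have hG : ∑ j, g j = 0 := by
    have := congrArg Prod.fst hg0
    simpa [Prod.fst_sum, smul_eq_mul] using this
  have hA : ∀ i, ∑ j, g j * f j i = 0 := by
    intro i
    have := congrArg (fun z : ℝ × (Fin n → ℝ) => z.2 i) hg0
    simpa [Prod.snd_sum, Finset.sum_apply, smul_eq_mul] using this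
  have hE1 : ∑ j, ∑ k, g j * g k * (∑ i, (f j i - f k i) ^ 4)
      = - (lam ^ 4 * ∑ j, g j ^ 2) := by
    have step : ∀ j k, g j * g k * (∑ i, (f j i - f k i) ^ 4)
        = g j * g k * lam ^ 4 - (if k = j then g j * g k * lam ^ 4 else 0) := by
      intro j k
      by_cases h : j = k
      · subst h; simp
      · rw [hf j k h, if_neg (Ne.symm h), sub_zero]
    have hzero : ∑ j, ∑ k, g j * g k * lam ^ 4
        = (∑ j, g j * lam ^ 4) * (∑ k, g k) := by
      rw [Finset.sum_mul_sum]
      exact Finset.sum_congr rfl fun j _ => Finset.sum_congr rfl fun k _ => by ring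
    calc ∑ j, ∑ k, g j * g k * (∑ i, (f j i - f k i) ^ 4)
        = ∑ j, ∑ k, (g j * g k * lam ^ 4 - (if k = j then g j * g k * lam ^ 4 else 0)) :=
          Finset.sum_congr rfl fun j _ => Finset.sum_congr rfl fun k _ => step j k
      _ = ∑ j, ((∑ k, g j * g k * lam ^ 4) - g j * g j * lam ^ 4) := by
          refine Finset.sum_congr rfl fun j _ => ?_
          rw [Finset.sum_sub_distrib, Finset.sum_ite_eq' Finset.univ j
            (fun k => g j * g k * lam ^ 4)]
          simp
      _ = - (lam ^ 4 * ∑ j, g j ^ 2) := by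
          rw [Finset.sum_sub_distrib, hzero, hG, mul_zero, zero_sub, Finset.mul_sum, neg_inj]
          exact Finset.sum_congr rfl fun j _ => by ring
  have hE2 : ∑ j, ∑ k, g j * g k * (∑ i, (f j i - f k i) ^ 4)
      = 6 * ∑ i, (∑ j, g j * f j i ^ 2) ^ 2 := by
    calc ∑ j, ∑ k, g j * g k * (∑ i, (f j i - f k i) ^ 4)
        = ∑ j, ∑ k, ∑ i, g j * g k * (f j i - f k i) ^ 4 := by
          refine Finset.sum_congr rfl fun j _ => Finset.sum_congr rfl fun k _ => ?_
          rw [Finset.mul_sum]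
      _ = ∑ j, ∑ i, ∑ k, g j * g k * (f j i - f k i) ^ 4 :=
          Finset.sum_congr rfl fun j _ => Finset.sum_comm
      _ = ∑ i, ∑ j, ∑ k, g j * g k * (f j i - f k i) ^ 4 := Finset.sum_comm
      _ = ∑ i, 6 * (∑ j, g j * f j i ^ 2) ^ 2 :=
          Finset.sum_congr rfl fun i _ => double_sum_expand g (fun j => f j i) hG (hA i)
      _ = 6 * ∑ i, (∑ j, g j * f j i ^ 2) ^ 2 := (Finset.mul_sum _ _ _).symm
  have hnn : 0 ≤ ∑ i, (∑ j, g j * f j i ^ 2) ^ 2 :=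
    Finset.sum_nonneg fun i _ => sq_nonneg _
  have hgg : 0 < ∑ j, g j ^ 2 :=
    Finset.sum_pos' (fun j _ => sq_nonneg _) ⟨j₀, Finset.mem_univ _, by positivity⟩
  nlinarith [hE1.symm.trans hE2, pow_pos hlam 4]

lemma sum_basis {n : ℕ} (j k : Fin n) (hjk : j ≠ k) :
    ∑ m, ((if m = j then (1:ℝ) else 0) - (if m = k then 1 else 0)) ^ 4 = 2 := by
  have hpt : ∀ m : Fin n, ((if m = j then (1:ℝ) else 0) - (if m = k then 1 else 0)) ^ 4
      = (if m = j then (1:ℝ) else 0) + (if m = k then 1 else 0) := by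
    intro m
    rcases eq_or_ne m j with h1 | h1 <;> rcases eq_or_ne m k with h2 | h2
    · exact absurd (h1.symm.trans h2) hjk
    · subst h1; simp [hjk]
    · subst h2
      simp [Ne.symm hjk]
      norm_num
    · simp [h1, h2]
  rw [Finset.sum_congr rfl fun m _ => hpt m, Finset.sum_add_distrib,
    Finset.sum_ite_eq' Finset.univ j (fun _ => (1:ℝ)),
    Finset.sum_ite_eq' Finset.univ k (fun _ => (1:ℝ))]
  norm_num

lemma sum_last {n : ℕ} (j : Fin n) (t : ℝ) (h : (1 - t) ^ 4 + ((n:ℝ) - 1) * t ^ 4 = 2) :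
    ∑ m, ((if m = j then (1:ℝ) else 0) - t) ^ 4 = 2 := by
  have hpt : ∀ m : Fin n, ((if m = j then (1:ℝ) else 0) - t) ^ 4
      = t ^ 4 + (if m = j then ((1 - t) ^ 4 - t ^ 4) else 0) := by
    intro m
    by_cases h1 : m = j <;> simp [h1] <;> ring
  rw [Finset.sum_congr rfl fun m _ => hpt m, Finset.sum_add_distrib,
    Finset.sum_ite_eq' Finset.univ j (fun _ => (1 - t) ^ 4 - t ^ 4),
    Finset.sum_const, Finset.card_univ, Fintype.card_fin]
  have hn0 : 0 < n := j.pos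
  have hn1 : (n:ℝ) ≥ 1 := by exact_mod_cast hn0
  simp only [nsmul_eq_mul, if_pos (Finset.mem_univ j)]
  nlinarith [h]

theorem stmt7 (n : ℕ) (hn : 1 ≤ n) :
    (∃ S : Set (Fin n → ℝ), S.Finite ∧ S.ncard = n + 1 ∧ IsEquilateral4 S) ∧
    (∀ S : Set (Fin n → ℝ), IsEquilateral4 S → S.Finite ∧ S.ncard ≤ n + 1) := by
  constructor
  · -- construction of an equilateral set of size n+1
    have hn1 : (1:ℝ) ≤ (n:ℝ) := by exact_mod_cast hn
    obtain ⟨t, htmem, ht⟩ : ∃ t ∈ Set.Icc (-1:ℝ) 0,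
        (fun t : ℝ => (1 - t) ^ 4 + ((n:ℝ) - 1) * t ^ 4) t = 2 := by
      have hcont : ContinuousOn (fun t : ℝ => (1 - t) ^ 4 + ((n:ℝ) - 1) * t ^ 4)
          (Set.Icc (-1) 0) := by
        have hc : Continuous (fun t : ℝ => (1 - t) ^ 4 + ((n:ℝ) - 1) * t ^ 4) := by continuity
        exact hc.continuousOn
      have hsub := intermediate_value_Icc' (by norm_num : (-1:ℝ) ≤ 0) hcont
      have h2 : (2:ℝ) ∈ Set.Icc ((fun t : ℝ => (1 - t) ^ 4 + ((n:ℝ) - 1) * t ^ 4) 0)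
          ((fun t : ℝ => (1 - t) ^ 4 + ((n:ℝ) - 1) * t ^ 4) (-1)) := by
        simp only [Set.mem_Icc]
        constructor <;> nlinarith
      obtain ⟨t, htmem, hteq⟩ := hsub h2
      exact ⟨t, htmem, hteq⟩
    simp only at ht
    have ht0 : t ≤ 0 := htmem.2
    set p : Fin (n+1) → (Fin n → ℝ) :=
      fun j m => if _ : (j:ℕ) < n then (if (m:ℕ) = (j:ℕ) then 1 else 0) else t with hp
    have hp_lt : ∀ (j : Fin (n+1)) (hj : (j:ℕ) < n),
        p j = fun m => if m = (⟨j, hj⟩ : Fin n) then (1:ℝ) else 0 := by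
      intro j hj
      funext m
      simp only [hp, dif_pos hj, Fin.ext_iff]
    have hp_last : ∀ (j : Fin (n+1)), ¬ ((j:ℕ) < n) → p j = fun _ => t := by
      intro j hj
      funext m
      simp only [hp, dif_neg hj]
    have hp_inj : Function.Injective p := by
      intro j k hjk
      by_contra hne
      have hv : (j:ℕ) ≠ (k:ℕ) := fun h => hne (Fin.ext h)
      by_cases hj : (j:ℕ) < n <;> by_cases hk : (k:ℕ) < n
      · have h := congrFun hjk ⟨j, hj⟩
        rw [hp_lt j hj, hp_lt k hk] at h
        simp [Fin.mk.injEq, hv] at h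
      · have h := congrFun hjk ⟨j, hj⟩
        rw [hp_lt j hj, hp_last k hk] at h
        norm_num at h
        linarith
      · have h := congrFun hjk ⟨k, hk⟩
        rw [hp_last j hj, hp_lt k hk] at h
        norm_num at h
        linarith
      · exact hv (by have := j.isLt; have := k.isLt; omega)
    refine ⟨Set.range p, Set.finite_range p, ?_, ?_⟩
    · rw [← Set.image_univ, Set.ncard_image_of_injective _ hp_inj, Set.ncard_univ,
        Nat.card_eq_fintype_card, Fintype.card_fin]
    · refine ⟨(2:ℝ) ^ ((1:ℝ)/4), by positivity, ?_⟩
      rintro x ⟨j, rfl⟩ y ⟨k, rfl⟩ hxy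
      have hjk : j ≠ k := fun h => hxy (by rw [h])
      have hsum : ∑ m, (p j m - p k m) ^ 4 = 2 := by
        by_cases hj : (j:ℕ) < n <;> by_cases hk : (k:ℕ) < n
        · rw [hp_lt j hj, hp_lt k hk]
          refine sum_basis ⟨j, hj⟩ ⟨k, hk⟩ ?_
          intro h
          rw [Fin.mk.injEq] at h
          exact hjk (Fin.ext h)
        · rw [hp_lt j hj, hp_last k hk]
          exact sum_last ⟨j, hj⟩ t ht
        · rw [hp_last j hj, hp_lt k hk]
          have hsym : ∀ m : Fin n,
              (t - (if m = (⟨k, hk⟩ : Fin n) then (1:ℝ) else 0)) ^ 4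
              = ((if m = (⟨k, hk⟩ : Fin n) then (1:ℝ) else 0) - t) ^ 4 := fun m => by ring
          rw [Finset.sum_congr rfl fun m _ => hsym m]
          exact sum_last ⟨k, hk⟩ t ht
        · exact absurd (Fin.ext (by have := j.isLt; have := k.isLt; omega)) hjk
      rw [norm4]
      simp only [Pi.sub_apply]
      rw [hsum]
  · -- upper bound
    intro S hS
    obtain ⟨lam, hlam, heq⟩ := hS
    have hT : ∀ T : Finset (Fin n → ℝ), ↑T ⊆ S → T.card ≤ n + 1 := by
      intro T hTS
      by_contra hcard
      push_neg at hcard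
      obtain ⟨T', hT'sub, hT'card⟩ := Finset.exists_subset_card_eq (show n+2 ≤ T.card by omega)
      let e : Fin (n+2) ≃ {x // x ∈ T'} := (T'.equivFin.trans (finCongr hT'card)).symm
      have hf_inj : Function.Injective (fun j : Fin (n+2) => (e j : Fin n → ℝ)) :=
        fun a b h => e.injective (Subtype.ext h)
      have hf_mem : ∀ j, ((e j : Fin n → ℝ)) ∈ S := fun j => hTS (hT'sub (e j).2)
      refine key lam hlam (fun j => (e j : Fin n → ℝ)) ?_
      intro j k hjk
      have hne : (e j : Fin n → ℝ) ≠ (e k : Fin n → ℝ) := fun h => hjk (hf_inj h)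
      have hnorm := heq _ (hf_mem j) _ (hf_mem k) hne
      have hs := sum_eq_of_norm4 _ lam hnorm
      simpa [Pi.sub_apply] using hs
    have hfin : S.Finite := by
      by_contra hinf
      obtain ⟨T, hTS, hTcard⟩ := Set.Infinite.exists_subset_card_eq hinf (n+2)
      have := hT T hTS
      omega
    refine ⟨hfin, ?_⟩
    have h := hT hfin.toFinset (by simp)
    rwa [← Set.Finite.coe_toFinset hfin, Set.ncard_coe_finset]
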